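/- With m the multiplicity function defined by the recursion in the context: for every integer M ≥ 1, m(2,0,M,2) = C(M,2) = M(M−1)/2. -/
import Mathlib


/-- `ε(a,b) = 1` if `(a,b) ∈ {(0,0),(1,1)}`, and `0` otherwise. -/
def eps (a b : ℤ) : ℕ := if (a = 0 ∧ b = 0) ∨ (a = 1 ∧ b = 1) then 1 else 0

/-- `T₁(a,b,·,k)` applied to a fixed-level slice `f` of the multiplicity function. -/
def T1 (f : ℤ → ℤ → ℤ → ℕ) (a b k : ℤ) : ℕ :=
  f (a + 1) b k + f a (b + 1) k + f (a - 1) b k + f a (b - 1) k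

/-- `T₂(a,b,·,k)` applied to a fixed-level slice `f` of the multiplicity function. -/
def T2 (f : ℤ → ℤ → ℤ → ℕ) (a b k : ℤ) : ℕ :=
  (2 - eps a b) * f a b k + f (a - 1) (b - 1) k + f (a - 1) (b + 1) k
    + f (a + 1) (b - 1) k + f (a + 1) (b + 1) k

/-- The base case `n = 1` of the multiplicity function. -/
def mBase (a b k : ℤ) : ℕ :=
  if (a = 0 ∧ b = 0 ∧ k = 0) ∨ (a = 1 ∧ b = 0 ∧ k = 1) ∨ (a = 0 ∧ b = 0 ∧ k = 2)
      ∨ (a = 1 ∧ b = 1 ∧ k = 2) ∨ (a = 1 ∧ b = 0 ∧ k = 3) ∨ (a = 0 ∧ b = 0 ∧ k = 4)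
  then 1 else 0

/-- Auxiliary recursion, indexed by `n : ℕ`: `mAux n a b k = m(a,b,n,k)`. -/
def mAux : ℕ → ℤ → ℤ → ℤ → ℕ
  | 0, _, _, _ => 0
  | 1, a, b, k => mBase a b k
  | (n + 2), a, b, k =>
      if b ≤ a ∧ 0 ≤ b ∧ 0 ≤ k then
        mAux (n + 1) a b k + T1 (mAux (n + 1)) a b (k - 1) + T2 (mAux (n + 1)) a b (k - 2)
          + T1 (mAux (n + 1)) a b (k - 3) + mAux (n + 1) a b (k - 4)
      else 0

/-- The multiplicity function `m(a,b,n,k)`: the multiplicity of the irreducible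
`Sp(4,ℂ)`-representation `V_{a,b}` in `H^k(Aⁿ; ℚ)`; it vanishes unless
`a ≥ b ≥ 0`, `n ≥ 1`, `k ≥ 0`. -/
def mult (a b n k : ℤ) : ℕ := if 1 ≤ n then mAux n.toNat a b k else 0

lemma mAux_neg (n : ℕ) (a b k : ℤ) (hk : k < 0) : mAux n a b k = 0 := by
  match n with
  | 0 => rfl
  | 1 => simp only [mAux, mBase]; split <;> [omega; rfl]
  | (n+2) => simp only [mAux]; rw [if_neg]; omega

lemma mAux_negb (n : ℕ) (a b k : ℤ) (hb : b < 0) : mAux n a b k = 0 := by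
  match n with
  | 0 => rfl
  | 1 => simp only [mAux, mBase]; split <;> [omega; rfl]
  | (n+2) => simp only [mAux]; rw [if_neg]; omega

lemma T1_neg (n : ℕ) (a b k : ℤ) (hk : k < 0) : T1 (mAux n) a b k = 0 := by
  simp [T1, mAux_neg n _ _ _ hk]

lemma T2_neg (n : ℕ) (a b k : ℤ) (hk : k < 0) : T2 (mAux n) a b k = 0 := by
  simp [T2, mAux_neg n _ _ _ hk]

lemma mAux_zero (n : ℕ) (a b : ℤ) : mAux (n+1) a b 0 = mBase a b 0 := by
  induction n with
  | zero => rfl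
  | succ n ih =>
    show mAux (n+2) a b 0 = _
    simp only [mAux]
    split
    · rw [T1_neg _ _ _ _ (by norm_num : (0:ℤ)-1 < 0), T2_neg _ _ _ _ (by norm_num : (0:ℤ)-2 < 0),
        T1_neg _ _ _ _ (by norm_num : (0:ℤ)-3 < 0), mAux_neg _ _ _ _ (by norm_num : (0:ℤ)-4 < 0), ih]
      omega
    · next h =>
      unfold mBase
      rw [if_neg]
      omega

lemma mAux_101 (n : ℕ) : mAux (n+1) 1 0 1 = n + 1 := by
  induction n with
  | zero => rfl
  | succ n ih =>
    show mAux (n+2) 1 0 1 = _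
    simp only [mAux, if_pos (by norm_num : (0:ℤ) ≤ 1 ∧ (0:ℤ) ≤ 0 ∧ (0:ℤ) ≤ 1)]
    norm_num [T1, T2_neg _ _ _ _ (by norm_num : (1:ℤ)-2 < 0),
      T1_neg _ _ _ _ (by norm_num : (1:ℤ)-3 < 0),
      mAux_neg _ _ _ _ (by norm_num : (1:ℤ)-4 < 0), mAux_zero, mBase, ih,
      mAux_neg _ 2 0 (-2) (by norm_num), mAux_neg _ 1 1 (-2) (by norm_num),
      mAux_neg _ 0 0 (-2) (by norm_num), mAux_neg _ 1 (-1) (-2) (by norm_num),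
      T2_neg _ _ _ _ (by norm_num : (-1:ℤ) < 0), mAux_neg _ 1 0 (-3) (by norm_num)]

lemma mAux_301 (n : ℕ) : mAux (n+1) 3 0 1 = 0 := by
  induction n with
  | zero => rfl
  | succ n ih =>
    show mAux (n+2) 3 0 1 = _
    simp only [mAux, if_pos (by norm_num : (0:ℤ) ≤ 3 ∧ (0:ℤ) ≤ 0 ∧ (0:ℤ) ≤ 1)]
    norm_num [T1, T2_neg _ _ _ _ (by norm_num : (1:ℤ)-2 < 0),
      T1_neg _ _ _ _ (by norm_num : (1:ℤ)-3 < 0),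
      mAux_neg _ _ _ _ (by norm_num : (1:ℤ)-4 < 0), mAux_zero, mBase, ih,
      T2_neg _ _ _ _ (by norm_num : (-1:ℤ) < 0),
      mAux_neg _ 4 0 (-2) (by norm_num), mAux_neg _ 3 1 (-2) (by norm_num),
      mAux_neg _ 2 0 (-2) (by norm_num), mAux_neg _ 3 (-1) (-2) (by norm_num),
      mAux_neg _ 3 0 (-3) (by norm_num)]

lemma mAux_211 (n : ℕ) : mAux (n+1) 2 1 1 = 0 := by
  induction n with
  | zero => rfl
  | succ n ih =>
    show mAux (n+2) 2 1 1 = _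
    simp only [mAux, if_pos (by norm_num : (1:ℤ) ≤ 2 ∧ (0:ℤ) ≤ 1 ∧ (0:ℤ) ≤ 1)]
    norm_num [T1, T2_neg _ _ _ _ (by norm_num : (1:ℤ)-2 < 0),
      T1_neg _ _ _ _ (by norm_num : (1:ℤ)-3 < 0),
      mAux_neg _ _ _ _ (by norm_num : (1:ℤ)-4 < 0), mAux_zero, mBase, ih,
      T2_neg _ _ _ _ (by norm_num : (-1:ℤ) < 0),
      mAux_neg _ 3 1 (-2) (by norm_num), mAux_neg _ 2 2 (-2) (by norm_num),
      mAux_neg _ 1 1 (-2) (by norm_num), mAux_neg _ 2 0 (-2) (by norm_num),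
      mAux_neg _ 2 1 (-3) (by norm_num)]

lemma mAux_202 (n : ℕ) : mAux (n+1) 2 0 2 = (n+1).choose 2 := by
  induction n with
  | zero => rfl
  | succ n ih =>
    show mAux (n+2) 2 0 2 = _
    simp only [mAux, if_pos (by norm_num : (0:ℤ) ≤ 2 ∧ (0:ℤ) ≤ 0 ∧ (0:ℤ) ≤ 2)]
    have h1 : (2:ℤ) - 1 = 1 := by norm_num
    have h0 : (2:ℤ) - 2 = 0 := by norm_num
    rw [h1, h0, T1_neg _ _ _ _ (by norm_num : (2:ℤ)-3 < 0),
      mAux_neg _ _ _ _ (by norm_num : (2:ℤ)-4 < 0)]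
    have hT1 : T1 (mAux (n+1)) 2 0 1 = n + 1 := by
      show mAux (n+1) 3 0 1 + mAux (n+1) 2 1 1 + mAux (n+1) 1 0 1
          + mAux (n+1) 2 (0-1) 1 = n + 1
      rw [mAux_301, mAux_211, mAux_101, mAux_negb _ _ _ _ (by norm_num : (0:ℤ)-1 < 0)]
      omega
    have hT2 : T2 (mAux (n+1)) 2 0 0 = 0 := by
      show (2 - eps 2 0) * mAux (n+1) 2 0 0 + mAux (n+1) (2-1) (0-1) 0
          + mAux (n+1) (2-1) (0+1) 0 + mAux (n+1) (2+1) (0-1) 0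
          + mAux (n+1) (2+1) (0+1) 0 = 0
      norm_num [mAux_zero, mAux_negb _ _ _ _ (by norm_num : (0:ℤ)-1 < 0), mBase]
    rw [hT1, hT2, ih]
    have : (n+1+1).choose 2 = (n+1).choose 1 + (n+1).choose 2 := Nat.choose_succ_succ _ _
    simp [this, Nat.choose_one_right]
    omega

/-- For every integer `M ≥ 1`, `m(2,0,M,2) = C(M,2) = M(M−1)/2`. -/
theorem mult_two_zero_two (M : ℤ) (hM : 1 ≤ M) :
    mult 2 0 M 2 = M.toNat.choose 2 ∧ (mult 2 0 M 2 : ℤ) = M * (M - 1) / 2 := by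
  have hmt : M.toNat = (M.toNat - 1) + 1 := by omega
  have h1 : mult 2 0 M 2 = M.toNat.choose 2 := by
    rw [mult, if_pos hM, hmt, mAux_202]
  refine ⟨h1, ?_⟩
  rw [h1]
  have h2 : 2 * M.toNat.choose 2 = M.toNat * (M.toNat - 1) := by
    have key : ∀ t : ℕ, 2 * t.choose 2 = t * (t - 1) := by
      intro t
      rcases t with _ | t
      · simp
      · rw [Nat.choose_two_right]
        simp only [Nat.add_sub_cancel]
        exact Nat.mul_div_cancel' (by simpa [mul_comm] using (Nat.even_mul_succ_self t).two_dvd)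
    exact key _
  have h3 : M * (M - 1) = (2:ℤ) * M.toNat.choose 2 := by
    have ht : ((M.toNat : ℤ)) = M := Int.toNat_of_nonneg (by omega)
    have ht1 : 1 ≤ M.toNat := by omega
    zify [ht1] at h2
    rw [ht] at h2
    omega
  rw [h3, Int.mul_ediv_cancel_left _ two_ne_zero]
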